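/- arXiv:1910.11988 — 4 statements merged into one kernel-verified Lean document; each statement's English description precedes it below -/
import Mathlib

section
/- Let f_1, f_2, ... be maps on a finite set S of size k, A_n = f_n ∘ ... ∘ f_1, and M(n) the induced matrix cocycle. Every pair of elements of S synchronizes (i.e., for all s, s' there is N with A_n(s) = A_n(s') for all n ≥ N) if and only if V = {v ∈ ℝ^k : M(n)v = 0 for some n} equals the hyperplane E₀ = {v : Σᵢ vᵢ = 0}, i.e., dim V = k − 1. -/
/-!
`M n` is the matrix pushing a vector forward along `A n`: column `j` is `e_{A n j}`, so
`M n` preserves the coordinate sum and `V ⊆ E₀` always. If all pairs synchronize then, `S` being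
finite, a single `A n` is constant, and a constant map kills all of `E₀`. Conversely, if
`e_s - e_{s'} ∈ V` then `M N` sends it to `e_{A N s} - e_{A N s'} = 0`, so `A N s = A N s'`,
and equal states stay equal under the later maps.
-/

open Finset Filter Matrix

section PushforwardMatrix

variable {α β R : Type*} [Fintype α] [DecidableEq β]

def pushforwardMatrix [Zero R] [One R] (g : α → β) : Matrix β α R :=
  Matrix.of fun i j => if g j = i then 1 else 0

variable [NonAssocSemiring R]

theorem pushforwardMatrix_mulVec_apply (g : α → β) (v : α → R) (i : β) :
    (pushforwardMatrix g *ᵥ v) i = ∑ j with g j = i, v j := by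
  simp [pushforwardMatrix, mulVec, dotProduct, Finset.sum_filter]

theorem sum_pushforwardMatrix_mulVec [Fintype β] (g : α → β) (v : α → R) :
    ∑ i, (pushforwardMatrix g *ᵥ v) i = ∑ j, v j := by
  simp only [pushforwardMatrix_mulVec_apply]
  exact Finset.sum_fiberwise univ g v

theorem pushforwardMatrix_mulVec_eq_zero_of_forall_eq {g : α → β} (hg : ∀ j j', g j = g j')
    {v : α → R} (hv : ∑ j, v j = 0) : pushforwardMatrix g *ᵥ v = 0 := by
  ext i
  rw [pushforwardMatrix_mulVec_apply, Pi.zero_apply]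
  by_cases hi : ∃ j, g j = i
  · obtain ⟨j₀, rfl⟩ := hi
    rw [Finset.filter_true_of_mem fun j _ => hg j j₀, hv]
  · push Not at hi
    rw [Finset.filter_false_of_mem fun j _ => hi j, Finset.sum_empty]

theorem pushforwardMatrix_mulVec_single [DecidableEq α] (g : α → β) (j : α) :
    pushforwardMatrix g *ᵥ Pi.single j (1 : R) = Pi.single (g j) 1 := by
  ext i
  simp [pushforwardMatrix, Pi.single_apply, eq_comm]

theorem apply_eq_of_pushforwardMatrix_mulVec_single_sub_single_eq_zero {R : Type*} [Ring R]
    [Nontrivial R] [DecidableEq α] {g : α → β} {s s' : α}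
    (h : pushforwardMatrix g *ᵥ (Pi.single s 1 - Pi.single s' 1 : α → R) = 0) : g s = g s' := by
  rw [Matrix.mulVec_sub, pushforwardMatrix_mulVec_single, pushforwardMatrix_mulVec_single,
    sub_eq_zero] at h
  by_contra hne
  simpa [Pi.single_apply, hne] using congrFun h (g s)

end PushforwardMatrix

theorem apply_eq_apply_of_le {α : Type*} {f A : ℕ → α → α}
    (hA : ∀ n, A (n + 1) = f (n + 1) ∘ A n) {s s' : α} {N n : ℕ}
    (hN : A N s = A N s') (hn : N ≤ n) : A n s = A n s' := by
  induction n, hn using Nat.le_induction with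
  | base => exact hN
  | succ n _ ih => simp only [hA n, Function.comp_apply, ih]

theorem exists_forall_apply_eq_of_forall_exists {α β : Type*} [Finite α] {A : ℕ → α → β}
    (h : ∀ s s' : α, ∃ N, ∀ n ≥ N, A n s = A n s') : ∃ n, ∀ s s', A n s = A n s' := by
  simp only [← eventually_atTop, ← eventually_all] at h
  exact h.exists

theorem stmt_10_general (k : ℕ) (f : ℕ → Fin k → Fin k)
    (A : ℕ → Fin k → Fin k) (hA : ∀ n, A (n + 1) = f (n + 1) ∘ A n)
    (M : ℕ → Matrix (Fin k) (Fin k) ℝ)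
    (hM : ∀ n, M n = Matrix.of fun i j => if A n j = i then (1 : ℝ) else 0) :
    (∀ s s' : Fin k, ∃ N, ∀ n ≥ N, A n s = A n s') ↔
      {v : Fin k → ℝ | ∃ n, (M n).mulVec v = 0} =
        {v : Fin k → ℝ | ∑ i, v i = 0} := by
  have hM : ∀ n, M n = pushforwardMatrix (A n) := hM
  constructor
  · intro hsync
    obtain ⟨n, hconst⟩ := exists_forall_apply_eq_of_forall_exists hsync
    ext v
    constructor
    · rintro ⟨m, hm⟩
      rw [Set.mem_ofPred_eq, ← sum_pushforwardMatrix_mulVec (A m), ← hM, hm]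
      simp
    · exact fun hv => ⟨n, hM n ▸ pushforwardMatrix_mulVec_eq_zero_of_forall_eq hconst hv⟩
  · intro hV s s'
    have hmem : (Pi.single s 1 - Pi.single s' 1 : Fin k → ℝ) ∈ {v | ∃ n, M n *ᵥ v = 0} := by
      rw [hV]
      simp [Finset.sum_sub_distrib]
    obtain ⟨N, hN⟩ := hmem
    rw [hM] at hN
    exact ⟨N, fun n hn => apply_eq_apply_of_le hA
      (apply_eq_of_pushforwardMatrix_mulVec_single_sub_single_eq_zero hN) hn⟩

/-- Every pair of states of a finite `k`-element set synchronizes under the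
compositions `A n = f n ∘ ⋯ ∘ f 1` if and only if
`V = {v : ∃ n, M(n)v = 0}` equals the hyperplane `E₀ = {v : ∑ i, v i = 0}`. -/
theorem stmt_10 (k : ℕ) (f : ℕ → Fin k → Fin k)
    (A : ℕ → Fin k → Fin k) (hA0 : A 0 = id) (hA : ∀ n, A (n + 1) = f (n + 1) ∘ A n)
    (M : ℕ → Matrix (Fin k) (Fin k) ℝ)
    (hM : ∀ n, M n = Matrix.of fun i j => if A n j = i then (1 : ℝ) else 0) :
    (∀ s s' : Fin k, ∃ N, ∀ n ≥ N, A n s = A n s') ↔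
      {v : Fin k → ℝ | ∃ n, (M n).mulVec v = 0} =
        {v : Fin k → ℝ | ∑ i, v i = 0} :=
  stmt_10_general k f A hA M hM
end

section
/- Let f : ℕ → ℕ (indexing states s_i) be the shift-type map with f(s_i) = s_{i−1} for i ≥ 2 and f(s_1) = s_1, M the induced operator on ℓ¹, and for λ ∈ (0,1) let v = (λ/(1−λ), −λ, −λ², −λ³, ...). Then ‖Mⁿ v‖₁ = 2λ^{n+1}/(1−λ) for all n ≥ 1, and consequently lim_{n→∞} (1/n) log ‖Mⁿ v‖₁ = log λ. Hence every value in (−∞, 0) occurs as a Lyapunov exponent of this countable-state cocycle. -/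
/-!
The vector `v` is the case `c = 1` of the two-parameter profile
`(c λ/(1-λ), -c λ, -c λ², …)`, and one step of `T` maps the profile with parameter `c`
to the one with parameter `c λ`: the head absorbs `-c λ` and the tail shifts. Hence
`Tⁿ v` is the profile with parameter `λⁿ`, whose `ℓ¹`-norm is `2 λⁿ⁺¹/(1-λ)`,
and `(1/n) log` of this tends to `log λ`.
-/

open Filter Topology

noncomputable section

def collapseShift (w : ℕ → ℝ) : ℕ → ℝ :=
  fun i => if i = 0 then w 0 + w 1 else w (i + 1)

def geomProfile (lam c : ℝ) : ℕ → ℝ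
  | 0 => c * lam / (1 - lam)
  | i + 1 => -(c * lam ^ (i + 1))

end

section

variable {lam : ℝ}

theorem collapseShift_geomProfile (h : lam ≠ 1) (c : ℝ) :
    collapseShift (geomProfile lam c) = geomProfile lam (c * lam) := by
  have : 1 - lam ≠ 0 := sub_ne_zero.mpr h.symm
  funext i
  rcases i with _ | i
  · simp only [collapseShift, geomProfile, if_true]
    field_simp
    ring
  · simp only [collapseShift, geomProfile, Nat.succ_ne_zero, if_false]
    ring

theorem iterate_collapseShift_geomProfile (h : lam ≠ 1) (c : ℝ) (n : ℕ) :
    collapseShift^[n] (geomProfile lam c) = geomProfile lam (c * lam ^ n) := by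
  induction n with
  | zero => simp
  | succ n ih =>
    rw [Function.iterate_succ_apply', ih, collapseShift_geomProfile h, mul_assoc, ← pow_succ]

theorem tsum_abs_geomProfile (h0 : 0 ≤ lam) (h1 : lam < 1) (c : ℝ) :
    ∑' i, |geomProfile lam c i| = 2 * |c| * lam / (1 - lam) := by
  have hpos : 0 < 1 - lam := sub_pos.mpr h1
  have htail : (fun i => |geomProfile lam c (i + 1)|) = fun i => |c| * lam * lam ^ i := by
    funext i
    simp only [geomProfile, abs_neg, abs_mul, abs_pow, abs_of_nonneg h0]
    ring
  have hsum : Summable fun i => |geomProfile lam c i| := by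
    rw [← summable_nat_add_iff 1, htail]
    exact (summable_geometric_of_lt_one h0 h1).mul_left _
  rw [hsum.tsum_eq_zero_add, htail, tsum_mul_left, tsum_geometric_of_lt_one h0 h1]
  simp only [geomProfile, abs_div, abs_mul, abs_of_nonneg h0, abs_of_pos hpos]
  field_simp
  ring

end

theorem tendsto_log_mul_pow_div {C a : ℝ} (hC : C ≠ 0) (ha : a ≠ 0) :
    Tendsto (fun n : ℕ => Real.log (C * a ^ n) / n) atTop (𝓝 (Real.log a)) := by
  have hlim : Tendsto (fun n : ℕ => Real.log C / n + Real.log a) atTop (𝓝 (Real.log a)) := by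
    simpa using (tendsto_const_div_atTop_nhds_zero_nat (Real.log C)).add_const (Real.log a)
  refine hlim.congr' ?_
  filter_upwards [eventually_ne_atTop 0] with n hn
  rw [Real.log_mul hC (pow_ne_zero n ha), Real.log_pow, add_div,
    mul_div_cancel_left₀ _ (Nat.cast_ne_zero.mpr hn)]

/-- For the shift-type map `f` on a countable state set (`f s₁ = s₁`,
`f sᵢ = s_{i-1}` for `i ≥ 2`), whose induced `ℓ¹`-operator `T` satisfies
`(T w)₁ = w₁ + w₂` and `(T w)ᵢ = w_{i+1}` for `i ≥ 2`, and for
`v = (λ/(1-λ), -λ, -λ², …)` with `0 < λ < 1`, one has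
`‖Tⁿ v‖₁ = 2λ^{n+1}/(1-λ)` for all `n ≥ 1`, hence
`lim (1/n) log ‖Tⁿ v‖₁ = log λ`. In particular every value in `(-∞, 0)` occurs
as a Lyapunov exponent of this countable-state cocycle. -/
theorem stmt_14 (lam : ℝ) (h0 : 0 < lam) (h1 : lam < 1)
    (v : ℕ → ℝ) (hv0 : v 0 = lam / (1 - lam)) (hv : ∀ i : ℕ, v (i + 1) = -lam ^ (i + 1))
    (T : (ℕ → ℝ) → (ℕ → ℝ))
    (hT : ∀ (w : ℕ → ℝ) (i : ℕ), T w i = if i = 0 then w 0 + w 1 else w (i + 1)) :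
    (∀ n : ℕ, 1 ≤ n → ∑' i, |T^[n] v i| = 2 * lam ^ (n + 1) / (1 - lam)) ∧
    Filter.Tendsto (fun n : ℕ => Real.log (∑' i, |T^[n] v i|) / n)
      Filter.atTop (nhds (Real.log lam)) := by
  have hT' : T = collapseShift := funext fun w => funext (hT w)
  have hv' : v = geomProfile lam 1 := by
    funext i
    rcases i with _ | i <;> simp [geomProfile, hv0, hv]
  have hnorm : ∀ n : ℕ, ∑' i, |T^[n] v i| = 2 * lam / (1 - lam) * lam ^ n := by
    intro n
    rw [hT', hv', iterate_collapseShift_geomProfile h1.ne, tsum_abs_geomProfile h0.le h1,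
      one_mul, abs_of_pos (pow_pos h0 n)]
    ring
  have hC : 0 < 2 * lam / (1 - lam) := div_pos (by positivity) (sub_pos.mpr h1)
  refine ⟨fun n _ => by rw [hnorm]; ring, ?_⟩
  simpa only [hnorm] using tendsto_log_mul_pow_div hC.ne' h0.ne'
end

section
/- Let f_1, f_2, ... be maps on a countable set S = {s_i : i ∈ ℕ}, A_n = f_n ∘ ... ∘ f_1, and M(n) the induced ℓ¹-operators. Suppose every pair in S synchronizes (for all i,j there is N with A_n(s_i) = A_n(s_j) for all n ≥ N). Then E₀ = {v ∈ ℓ¹ : Σᵢ vᵢ = 0} is contained in the closure of {v ∈ ℓ¹ : limsup (1/n) log ‖M(n)v‖₁ = −∞}. -/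
open Filter

/-- `‖M(n)v‖₁` : the `ℓ¹`-norm of the image of `v` under the operator induced by
the composition `A n` of maps on the countable state set `ℕ`,
`(M(n)v)_i = ∑_{j : A n j = i} v_j`. -/
noncomputable def cocycleNorm (A : ℕ → ℕ → ℕ) (v : lp (fun _ : ℕ => ℝ) 1) (n : ℕ) : ℝ :=
  ∑' i : ℕ, |∑' j : {j : ℕ // A n j = i}, (v : ℕ → ℝ) j|

/-- The Lyapunov exponent `limsup (1/n) log ‖M(n)v‖₁`, valued in `EReal`, with
`log 0 = ⊥`. -/
noncomputable def lyapExp (A : ℕ → ℕ → ℕ) (v : lp (fun _ : ℕ => ℝ) 1) : EReal :=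
  Filter.limsup (fun n : ℕ =>
    if cocycleNorm A v n = 0 then (⊥ : EReal)
    else ((Real.log (cocycleNorm A v n) / n : ℝ) : EReal)) Filter.atTop

/-!
A finitely supported vector with coordinate sum zero has Lyapunov exponent `−∞`: once the
finitely many states of its support have synchronized, each fibre of `A n` contains either the
whole support or none of it, so `M(n)v = 0`. Such vectors approximate every `v ∈ E₀`: truncate
`v` to its first `K` coordinates and subtract the truncated sum at coordinate `0`; the
correction tends to `∑ᵢ vᵢ = 0`.
-/

open Topology Finset

section ZeroSumTruncation

variable {E : Type*} [NormedAddCommGroup E]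

noncomputable def zeroSumTrunc (v : lp (fun _ : ℕ => E) 1) (K : ℕ) : lp (fun _ : ℕ => E) 1 :=
  ∑ i ∈ range K, lp.single 1 i (v i) - lp.single 1 0 (∑ i ∈ range K, v i)

lemma zeroSumTrunc_apply (v : lp (fun _ : ℕ => E) 1) (K j : ℕ) :
    zeroSumTrunc v K j =
      (if j ∈ range K then v j else 0) - if j = 0 then ∑ i ∈ range K, v i else 0 := by
  simp only [zeroSumTrunc, lp.coeFn_sub, lp.coeFn_sum, Pi.sub_apply, Finset.sum_apply,
    lp.coeFn_single, Pi.single_apply, Finset.sum_ite_eq]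

lemma zeroSumTrunc_apply_of_lt (v : lp (fun _ : ℕ => E) 1) {K j : ℕ} (hj : K < j) :
    zeroSumTrunc v K j = 0 := by
  rw [zeroSumTrunc_apply, if_neg (by simp; omega), if_neg (by omega), sub_zero]

lemma sum_range_succ_zeroSumTrunc (v : lp (fun _ : ℕ => E) 1) (K : ℕ) :
    ∑ j ∈ range (K + 1), zeroSumTrunc v K j = 0 := by
  simp only [zeroSumTrunc_apply]
  rw [Finset.sum_sub_distrib, Finset.sum_ite_mem, Finset.sum_ite_eq', if_pos (by simp),
    Finset.range_inter_range, min_eq_right K.le_succ, sub_self]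

lemma tendsto_zeroSumTrunc [CompleteSpace E] (v : lp (fun _ : ℕ => E) 1)
    (hv : ∑' i, v i = 0) : Tendsto (zeroSumTrunc v) atTop (𝓝 v) := by
  have hpartial : Tendsto (fun K => ∑ i ∈ range K, lp.single 1 i (v i)) atTop (𝓝 v) :=
    (lp.hasSum_single ENNReal.one_ne_top v).tendsto_sum_nat
  have hsum : Tendsto (fun K => ∑ i ∈ range K, v i) atTop (𝓝 0) :=
    hv ▸ (lp.memℓp v).summable_of_one.hasSum.tendsto_sum_nat
  have hcorr : Tendsto (fun K => (lp.single 1 0 (∑ i ∈ range K, v i) : lp (fun _ : ℕ => E) 1))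
      atTop (𝓝 0) := by
    rw [tendsto_zero_iff_norm_tendsto_zero]
    simpa [lp.norm_single] using hsum.norm
  have hlim := hpartial.sub hcorr
  rwa [sub_zero] at hlim

end ZeroSumTruncation

lemma cocycleNorm_eq_zero_of_sum_eq_zero (A : ℕ → ℕ → ℕ) (v : lp (fun _ : ℕ => ℝ) 1)
    (n : ℕ) (s : Finset ℕ) (hv : ∀ j ∉ s, v j = 0) (hsum : ∑ j ∈ s, v j = 0)
    (hA : ∀ j ∈ s, ∀ k ∈ s, A n j = A n k) :
    cocycleNorm A v n = 0 := by
  have hfiber : ∀ i, ∑' j : {j : ℕ // A n j = i}, v j = 0 := by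
    intro i
    rw [show ∑' j : {j // A n j = i}, v j = ∑' j, {j | A n j = i}.indicator v j from
        tsum_subtype _ _, tsum_eq_sum (s := s) fun j hj => by simp [hv j hj],
      Finset.sum_indicator_eq_sum_filter]
    simp only [Set.mem_ofPred_eq]
    by_cases hi : ∃ k ∈ s, A n k = i
    · obtain ⟨k, hk, rfl⟩ := hi
      rwa [Finset.filter_true_of_mem fun j hj => hA j hj k hk]
    · push Not at hi
      rw [Finset.filter_false_of_mem hi, Finset.sum_empty]
  simp [cocycleNorm, hfiber]

lemma lyapExp_eq_bot_of_eventually_cocycleNorm_eq_zero (A : ℕ → ℕ → ℕ)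
    (v : lp (fun _ : ℕ => ℝ) 1) (h : ∀ᶠ n in atTop, cocycleNorm A v n = 0) :
    lyapExp A v = ⊥ :=
  (limsup_congr (h.mono fun _ hn => if_pos hn)).trans (limsup_const _)

theorem stmt_15_general (A : ℕ → ℕ → ℕ)
    (hsync : ∀ i j : ℕ, ∃ N, ∀ n ≥ N, A n i = A n j) :
    {v : lp (fun _ : ℕ => ℝ) 1 | ∑' i, (v : ℕ → ℝ) i = 0} ⊆
      closure {v : lp (fun _ : ℕ => ℝ) 1 | lyapExp A v = ⊥} := by
  intro v hv
  refine mem_closure_of_tendsto (tendsto_zeroSumTrunc v hv) (Eventually.of_forall fun K => ?_)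
  have hsync_fin :
      ∀ᶠ n in atTop, ∀ j ∈ range (K + 1), ∀ k ∈ range (K + 1), A n j = A n k := by
    simp only [eventually_all_finset]
    exact fun j _ k _ => eventually_atTop.2 (hsync j k)
  refine lyapExp_eq_bot_of_eventually_cocycleNorm_eq_zero A _ (hsync_fin.mono fun n hn => ?_)
  exact cocycleNorm_eq_zero_of_sum_eq_zero A _ n _
    (fun j hj => zeroSumTrunc_apply_of_lt v (by simpa using hj))
    (sum_range_succ_zeroSumTrunc v K) hn

/-- If every pair of states of a countable state set synchronizes under the
compositions `A n = f n ∘ ⋯ ∘ f 1`, then the hyperplane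
`E₀ = {v ∈ ℓ¹ : ∑ᵢ vᵢ = 0}` is contained in the closure of the set of vectors
with Lyapunov exponent `−∞`. -/
theorem stmt_15 (f : ℕ → ℕ → ℕ) (A : ℕ → ℕ → ℕ)
    (hA0 : A 0 = id) (hA : ∀ n, A (n + 1) = f (n + 1) ∘ A n)
    (hsync : ∀ i j : ℕ, ∃ N, ∀ n ≥ N, A n i = A n j) :
    {v : lp (fun _ : ℕ => ℝ) 1 | ∑' i, (v : ℕ → ℝ) i = 0} ⊆
      closure {v : lp (fun _ : ℕ => ℝ) 1 | lyapExp A v = ⊥} :=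
  stmt_15_general A hsync
end

section
/- Let f_1, f_2, ... be maps on a countable set S = {s_i : i ∈ ℕ}, A_n = f_n ∘ ... ∘ f_1, and M(n) the induced ℓ¹-operators. If v ∈ ℓ¹ has Σᵢ vᵢ = a ≠ 0 and every pair in S synchronizes, then there exists c > 0 such that ‖M(n)v‖₁ ≥ c for all sufficiently large n; in particular limsup (1/n) log ‖M(n)v‖₁ = 0 ≠ −∞. Hence the closure of {v : Lyapunov exponent is −∞} is contained in E₀ = {v ∈ ℓ¹ : Σᵢ vᵢ = 0}. -/
/-!
Each `M(n)` preserves the coordinate sum, so by the triangle inequality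
`‖M(n)v‖₁ ≥ |∑ᵢ vᵢ|`; it is also a contraction of `ℓ¹`. Hence for `∑ᵢ vᵢ ≠ 0` the sequence
`log ‖M(n)v‖₁` is bounded and the Lyapunov exponent is `0`. So every vector of exponent `−∞`
lies in `E₀`, which is closed as the zero set of the continuous functional `v ↦ ∑ᵢ vᵢ`.
-/

open Filter Topology

lemma abs_tsum_le_tsum_abs {ι : Type*} {f : ι → ℝ} (hf : Summable fun i => |f i|) :
    |∑' i, f i| ≤ ∑' i, |f i| := by
  simpa only [Real.norm_eq_abs] using
    norm_tsum_le_tsum_norm (f := f) (by simpa only [Real.norm_eq_abs])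

section Fibers

variable {α β : Type*} (g : α → β) {v : α → ℝ}

lemma abs_tsum_fiber_le (hv : Summable v) (i : β) :
    |∑' j : {j // g j = i}, v j| ≤ ∑' j : {j // g j = i}, |v j| :=
  abs_tsum_le_tsum_abs (hv.abs.comp_injective Subtype.val_injective)

lemma summable_abs_tsum_fiber (hv : Summable v) :
    Summable fun i => |∑' j : {j // g j = i}, v j| :=
  .of_nonneg_of_le (fun _ => abs_nonneg _) (abs_tsum_fiber_le g hv)
    (hv.abs.hasSum.tsum_fiberwise g).summable

lemma abs_tsum_le_tsum_abs_tsum_fiber (hv : Summable v) :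
    |∑' j, v j| ≤ ∑' i, |∑' j : {j // g j = i}, v j| := by
  have hfib : HasSum (fun i => ∑' j : {j // g j = i}, v j) (∑' j, v j) :=
    hv.hasSum.tsum_fiberwise g
  rw [← hfib.tsum_eq]
  exact abs_tsum_le_tsum_abs (summable_abs_tsum_fiber g hv)

lemma tsum_abs_tsum_fiber_le (hv : Summable v) :
    ∑' i, |∑' j : {j // g j = i}, v j| ≤ ∑' j, |v j| := by
  have hfib : HasSum (fun i => ∑' j : {j // g j = i}, |v j|) (∑' j, |v j|) :=
    hv.abs.hasSum.tsum_fiberwise g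
  rw [← hfib.tsum_eq]
  exact (summable_abs_tsum_fiber g hv).tsum_le_tsum (abs_tsum_fiber_le g hv) hfib.summable

end Fibers

lemma lp.norm_eq_tsum_abs {α : Type*} (v : lp (fun _ : α => ℝ) 1) :
    ‖v‖ = ∑' i, |(v : α → ℝ) i| := by
  rw [lp.norm_eq_tsum_rpow (by norm_num)]
  simp

lemma tendsto_log_div_atTop_nhds_zero_of_bounds {x : ℕ → ℝ} {c C : ℝ} (hc : 0 < c)
    (hlow : ∀ᶠ n in atTop, c ≤ x n) (hup : ∀ n, x n ≤ C) :
    Tendsto (fun n : ℕ => Real.log (x n) / n) atTop (𝓝 0) := by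
  refine tendsto_of_tendsto_of_tendsto_of_le_of_le'
    (tendsto_const_div_atTop_nhds_zero_nat (Real.log c))
    (tendsto_const_div_atTop_nhds_zero_nat (Real.log C)) ?_ ?_ <;>
  filter_upwards [hlow] with n hn
  · gcongr
  · gcongr
    exacts [hc.trans_le hn, hup n]

section Cocycle

variable (A : ℕ → ℕ → ℕ) (v : lp (fun _ : ℕ => ℝ) 1) (n : ℕ)

lemma abs_tsum_le_cocycleNorm : |∑' i, (v : ℕ → ℝ) i| ≤ cocycleNorm A v n :=
  abs_tsum_le_tsum_abs_tsum_fiber (A n) (lp.memℓp v).summable_of_one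

lemma cocycleNorm_le_norm : cocycleNorm A v n ≤ ‖v‖ :=
  (lp.norm_eq_tsum_abs v).symm ▸ tsum_abs_tsum_fiber_le (A n) (lp.memℓp v).summable_of_one

lemma lyapExp_eq_zero_of_eventually_le {c : ℝ} (hc : 0 < c)
    (h : ∀ᶠ n in atTop, c ≤ cocycleNorm A v n) : lyapExp A v = 0 := by
  have hlog := tendsto_log_div_atTop_nhds_zero_of_bounds hc h (cocycleNorm_le_norm A v)
  refine (Filter.limsup_congr ?_).trans (EReal.tendsto_coe.mpr hlog).limsup_eq
  filter_upwards [h] with n hn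
  rw [if_neg (hc.trans_le hn).ne']

end Cocycle

theorem stmt_16_general (A : ℕ → ℕ → ℕ) :
    (∀ v : lp (fun _ : ℕ => ℝ) 1, (∑' i, (v : ℕ → ℝ) i) ≠ 0 →
      (∃ c > (0 : ℝ), ∃ N, ∀ n ≥ N, c ≤ cocycleNorm A v n) ∧
      lyapExp A v = (0 : EReal)) ∧
    closure {v : lp (fun _ : ℕ => ℝ) 1 | lyapExp A v = ⊥} ⊆
      {v : lp (fun _ : ℕ => ℝ) 1 | ∑' i, (v : ℕ → ℝ) i = 0} := by
  have bounded_below : ∀ v : lp (fun _ : ℕ => ℝ) 1, (∑' i, (v : ℕ → ℝ) i) ≠ 0 →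
      (∃ c > (0 : ℝ), ∃ N, ∀ n ≥ N, c ≤ cocycleNorm A v n) ∧ lyapExp A v = 0 := by
    intro v hv
    have hpos : 0 < |∑' i, (v : ℕ → ℝ) i| := abs_pos.mpr hv
    exact ⟨⟨_, hpos, 0, fun n _ => abs_tsum_le_cocycleNorm A v n⟩,
      lyapExp_eq_zero_of_eventually_le A v hpos (.of_forall (abs_tsum_le_cocycleNorm A v))⟩
  have hclosed : IsClosed {v : lp (fun _ : ℕ => ℝ) 1 | ∑' i, (v : ℕ → ℝ) i = 0} :=
    isClosed_eq (lp.tsumCLM (α := ℕ) (𝕜 := ℝ) (E := ℝ)).continuous continuous_const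
  refine ⟨bounded_below, closure_minimal (fun v hv => ?_) hclosed⟩
  by_contra hv0
  exact EReal.bot_ne_zero (hv.out ▸ (bounded_below v hv0).2)

/-- Suppose every pair of states of a countable state set synchronizes under the
compositions `A n = f n ∘ ⋯ ∘ f 1`. If `v ∈ ℓ¹` has nonzero coordinate sum, then
`‖M(n)v‖₁` is bounded below by a positive constant for all large `n`, and the
Lyapunov exponent of `v` is `0` (in particular not `−∞`). Consequently the
closure of the set of vectors with Lyapunov exponent `−∞` is contained in
`E₀ = {v ∈ ℓ¹ : ∑ᵢ vᵢ = 0}`. -/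
theorem stmt_16 (f : ℕ → ℕ → ℕ) (A : ℕ → ℕ → ℕ)
    (hA0 : A 0 = id) (hA : ∀ n, A (n + 1) = f (n + 1) ∘ A n)
    (hsync : ∀ i j : ℕ, ∃ N, ∀ n ≥ N, A n i = A n j) :
    (∀ v : lp (fun _ : ℕ => ℝ) 1, (∑' i, (v : ℕ → ℝ) i) ≠ 0 →
      (∃ c > (0 : ℝ), ∃ N, ∀ n ≥ N, c ≤ cocycleNorm A v n) ∧
      lyapExp A v = (0 : EReal)) ∧
    closure {v : lp (fun _ : ℕ => ℝ) 1 | lyapExp A v = ⊥} ⊆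
      {v : lp (fun _ : ℕ => ℝ) 1 | ∑' i, (v : ℕ → ℝ) i = 0} :=
  stmt_16_general A
end
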